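/- arXiv:2506.16121 — 10 statements merged into one kernel-verified Lean document; each statement's English description precedes it below -/
import Mathlib

section
/- Let G = (U, V, E) be a bipartite graph, k a natural number, and D = (U_D, V_D, E_D) a k-defective biclique of G. If |U_D| > k and |V_D| > k, then D is connected, i.e., the graph on vertex set U_D ∪ V_D whose edges are the pairs in E_D is a connected graph. -/
/-!
If `u, u' ∈ U_D` had no common neighbour in `V_D`, then every `v ∈ V_D` would be a non-neighbour of
`u` or of `u'`, giving `|V_D| > k` distinct non-edges `(u, v)` or `(u', v)`. Hence any two vertices
of `U_D` are joined by a path of length two, and symmetrically every vertex of `V_D` has a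
neighbour in `U_D`.
-/

/-- Membership of a vertex of the sum type in the subgraph `D = (U_D, V_D)`. -/
def inD {α β : Type*} (UD : Finset α) (VD : Finset β) : α ⊕ β → Prop
  | Sum.inl u => u ∈ UD
  | Sum.inr v => v ∈ VD

/-- Adjacency in the induced subgraph `D = (U_D, V_D, E_D)` with `E_D = E ∩ (U_D × V_D)`. -/
def adjD {α β : Type*} (UD : Finset α) (VD : Finset β) (E : Finset (α × β)) :
    α ⊕ β → α ⊕ β → Prop
  | Sum.inl u, Sum.inr v => u ∈ UD ∧ v ∈ VD ∧ (u, v) ∈ E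
  | Sum.inr v, Sum.inl u => u ∈ UD ∧ v ∈ VD ∧ (u, v) ∈ E
  | _, _ => False

namespace Finset

variable {α β : Type*} [DecidableEq α] [DecidableEq β] {s : Finset α} {t : Finset β}
  {E : Finset (α × β)}

theorem exists_common_right_of_card_sdiff_lt (hdef : ((s ×ˢ t) \ E).card < t.card)
    {a a' : α} (ha : a ∈ s) (ha' : a' ∈ s) : ∃ b ∈ t, (a, b) ∈ E ∧ (a', b) ∈ E := by
  by_contra! hmiss
  -- column `b` contains the non-edge `(a, b)` or `(a', b)`
  have : t.card ≤ ((s ×ˢ t) \ E).card := by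
    refine card_le_card_of_injOn (fun b => (if (a, b) ∈ E then a' else a, b)) ?_
      fun b _ b' _ h => congrArg Prod.snd h
    intro b hb
    by_cases hab : (a, b) ∈ E
    · simpa [hab, ha', hb] using hmiss b hb hab
    · simp [hab, ha, hb]
  omega

theorem exists_common_left_of_card_sdiff_lt (hdef : ((s ×ˢ t) \ E).card < s.card)
    {b b' : β} (hb : b ∈ t) (hb' : b' ∈ t) : ∃ a ∈ s, (a, b) ∈ E ∧ (a, b') ∈ E := by
  have hswap : ((t ×ˢ s) \ E.image Prod.swap).card = ((s ×ˢ t) \ E).card := by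
    rw [← image_swap_product, ← image_sdiff _ _ Prod.swap_injective,
      card_image_of_injective _ Prod.swap_injective]
  obtain ⟨a, ha, hba, hb'a⟩ :=
    exists_common_right_of_card_sdiff_lt (hswap.trans_lt hdef) hb hb'
  rw [← Prod.swap_prod_mk, Prod.swap_injective.mem_finset_image] at hba hb'a
  exact ⟨a, ha, hba, hb'a⟩

end Finset

section adjD

variable {α β : Type*} {UD : Finset α} {VD : Finset β} {E : Finset (α × β)}

instance : Std.Symm (adjD UD VD E) where
  symm := by rintro (u | v) (u' | v') h <;> exact h

variable [DecidableEq α] [DecidableEq β]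

theorem reflTransGen_adjD_inl_inl (hdef : ((UD ×ˢ VD) \ E).card < VD.card)
    {u u' : α} (hu : u ∈ UD) (hu' : u' ∈ UD) :
    Relation.ReflTransGen (adjD UD VD E) (Sum.inl u) (Sum.inl u') := by
  obtain ⟨v, hv, huv, hu'v⟩ := Finset.exists_common_right_of_card_sdiff_lt hdef hu hu'
  exact .head (b := Sum.inr v) ⟨hu, hv, huv⟩ (.single ⟨hu', hv, hu'v⟩)

theorem exists_reflTransGen_adjD_inl (hdef : ((UD ×ˢ VD) \ E).card < UD.card)
    {x : α ⊕ β} (hx : inD UD VD x) :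
    ∃ u ∈ UD, Relation.ReflTransGen (adjD UD VD E) x (Sum.inl u) := by
  rcases x with u | v
  · exact ⟨u, hx, .refl⟩
  · obtain ⟨u, hu, hvu, -⟩ := Finset.exists_common_left_of_card_sdiff_lt hdef hx hx
    exact ⟨u, hu, .single ⟨hu, hx, hvu⟩⟩

end adjD

theorem kDefectiveBiclique_connected_general {α β : Type*} [DecidableEq α] [DecidableEq β]
    (E : Finset (α × β))
    (k : ℕ) (UD : Finset α) (VD : Finset β)
    (hdef : ((UD ×ˢ VD) \ E).card ≤ k)
    (hU : k < UD.card) (hV : k < VD.card) :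
    ∀ x y : α ⊕ β, inD UD VD x → inD UD VD y →
      Relation.ReflTransGen (adjD UD VD E) x y := by
  intro x y hx hy
  obtain ⟨u, hu, hxu⟩ := exists_reflTransGen_adjD_inl (hdef.trans_lt hU) hx
  obtain ⟨u', hu', hyu'⟩ := exists_reflTransGen_adjD_inl (hdef.trans_lt hU) hy
  exact hxu.trans <| (reflTransGen_adjD_inl_inl (hdef.trans_lt hV) hu hu').trans <|
    symm hyu'

/-- a `k`-defective biclique with both sides larger than `k` is connected. -/
theorem kDefectiveBiclique_connected {α β : Type*} [DecidableEq α] [DecidableEq β]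
    (U : Finset α) (V : Finset β) (E : Finset (α × β)) (hE : E ⊆ U ×ˢ V)
    (k : ℕ) (UD : Finset α) (VD : Finset β) (hUD : UD ⊆ U) (hVD : VD ⊆ V)
    (hdef : ((UD ×ˢ VD) \ E).card ≤ k)
    (hU : k < UD.card) (hV : k < VD.card) :
    ∀ x y : α ⊕ β, inD UD VD x → inD UD VD y →
      Relation.ReflTransGen (adjD UD VD E) x y :=
  kDefectiveBiclique_connected_general E k UD VD hdef hU hV
end

section
/- Let G = (U, V, E) be a bipartite graph, k a natural number, and D = (U_D, V_D, E_D) a k-defective biclique of G. If |U_D| > k and |V_D| > k, then for any two vertices x, y ∈ U_D ∪ V_D there is a walk from x to y inside D (using only edges of E_D) of length at most 3; that is, the distance between any two vertices of D is at most 3. -/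
section Helpers

variable {α β : Type*} [DecidableEq α] [DecidableEq β]

open Classical in
lemma neighbor_right {E : Finset (α × β)} {k : ℕ} {UD : Finset α} {VD : Finset β}
    (hdef : ((UD ×ˢ VD) \ E).card ≤ k) (hV : k < VD.card)
    {u : α} (hu : u ∈ UD) : ∃ v ∈ VD, (u, v) ∈ E := by
  by_contra h
  push_neg at h
  have hsub : VD.image (fun v => (u, v)) ⊆ (UD ×ˢ VD) \ E := by
    intro p hp
    obtain ⟨v, hv, rfl⟩ := Finset.mem_image.1 hp
    simp only [Finset.mem_sdiff, Finset.mem_product]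
    exact ⟨⟨hu, hv⟩, h v hv⟩
  have hcard : VD.card ≤ ((UD ×ˢ VD) \ E).card := by
    calc VD.card = (VD.image (fun v => (u, v))).card :=
          (Finset.card_image_of_injective _ (fun a b hab => by injection hab)).symm
      _ ≤ _ := Finset.card_le_card hsub
  omega

open Classical in
lemma common_right {E : Finset (α × β)} {k : ℕ} {UD : Finset α} {VD : Finset β}
    (hdef : ((UD ×ˢ VD) \ E).card ≤ k) (hV : k < VD.card)
    {u u' : α} (hu : u ∈ UD) (hu' : u' ∈ UD) (hne : u ≠ u') :
    ∃ v ∈ VD, (u, v) ∈ E ∧ (u', v) ∈ E := by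
  by_contra h
  push_neg at h
  set B := VD.filter (fun v => (u, v) ∉ E) with hB
  set B' := VD.filter (fun v => (u', v) ∉ E) with hB'
  have hVDsub : VD ⊆ B ∪ B' := by
    intro v hv
    by_cases h1 : (u, v) ∈ E
    · exact Finset.mem_union_right _ (Finset.mem_filter.2 ⟨hv, h v hv h1⟩)
    · exact Finset.mem_union_left _ (Finset.mem_filter.2 ⟨hv, h1⟩)
  have hsub : (B.image fun v => (u, v)) ∪ (B'.image fun v => (u', v)) ⊆ (UD ×ˢ VD) \ E := by
    intro p hp
    rcases Finset.mem_union.1 hp with hp | hp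
    · obtain ⟨v, hv, rfl⟩ := Finset.mem_image.1 hp
      obtain ⟨hv1, hv2⟩ := Finset.mem_filter.1 hv
      simp only [Finset.mem_sdiff, Finset.mem_product]
      exact ⟨⟨hu, hv1⟩, hv2⟩
    · obtain ⟨v, hv, rfl⟩ := Finset.mem_image.1 hp
      obtain ⟨hv1, hv2⟩ := Finset.mem_filter.1 hv
      simp only [Finset.mem_sdiff, Finset.mem_product]
      exact ⟨⟨hu', hv1⟩, hv2⟩
  have hdisj : Disjoint (B.image fun v => (u, v)) (B'.image fun v => (u', v)) := by
    simp only [Finset.disjoint_left]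
    intro p hp hp'
    obtain ⟨v, _, rfl⟩ := Finset.mem_image.1 hp
    obtain ⟨v', _, h2⟩ := Finset.mem_image.1 hp'
    exact hne (congrArg Prod.fst h2).symm
  have hBi : (B.image fun v => (u, v)).card = B.card :=
    Finset.card_image_of_injective _ (fun a b hab => by injection hab)
  have hBi' : (B'.image fun v => (u', v)).card = B'.card :=
    Finset.card_image_of_injective _ (fun a b hab => by injection hab)
  have h1 : B.card + B'.card ≤ k := by
    have := Finset.card_le_card hsub
    rw [Finset.card_union_of_disjoint hdisj, hBi, hBi'] at this
    omega
  have h2 : VD.card ≤ B.card + B'.card :=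
    le_trans (Finset.card_le_card hVDsub) (Finset.card_union_le B B')
  omega

open Classical in
lemma common_left {E : Finset (α × β)} {k : ℕ} {UD : Finset α} {VD : Finset β}
    (hdef : ((UD ×ˢ VD) \ E).card ≤ k) (hU : k < UD.card)
    {v v' : β} (hv : v ∈ VD) (hv' : v' ∈ VD) (hne : v ≠ v') :
    ∃ u ∈ UD, (u, v) ∈ E ∧ (u, v') ∈ E := by
  by_contra h
  push_neg at h
  set B := UD.filter (fun u => (u, v) ∉ E) with hB
  set B' := UD.filter (fun u => (u, v') ∉ E) with hB'
  have hUDsub : UD ⊆ B ∪ B' := by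
    intro u hu
    by_cases h1 : (u, v) ∈ E
    · exact Finset.mem_union_right _ (Finset.mem_filter.2 ⟨hu, h u hu h1⟩)
    · exact Finset.mem_union_left _ (Finset.mem_filter.2 ⟨hu, h1⟩)
  have hsub : (B.image fun u => (u, v)) ∪ (B'.image fun u => (u, v')) ⊆ (UD ×ˢ VD) \ E := by
    intro p hp
    rcases Finset.mem_union.1 hp with hp | hp
    · obtain ⟨u, hu, rfl⟩ := Finset.mem_image.1 hp
      obtain ⟨hu1, hu2⟩ := Finset.mem_filter.1 hu
      simp only [Finset.mem_sdiff, Finset.mem_product]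
      exact ⟨⟨hu1, hv⟩, hu2⟩
    · obtain ⟨u, hu, rfl⟩ := Finset.mem_image.1 hp
      obtain ⟨hu1, hu2⟩ := Finset.mem_filter.1 hu
      simp only [Finset.mem_sdiff, Finset.mem_product]
      exact ⟨⟨hu1, hv'⟩, hu2⟩
  have hdisj : Disjoint (B.image fun u => (u, v)) (B'.image fun u => (u, v')) := by
    simp only [Finset.disjoint_left]
    intro p hp hp'
    obtain ⟨u, _, rfl⟩ := Finset.mem_image.1 hp
    obtain ⟨u', _, h2⟩ := Finset.mem_image.1 hp'
    exact hne (congrArg Prod.snd h2).symm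
  have hBi : (B.image fun u => (u, v)).card = B.card :=
    Finset.card_image_of_injective _ (fun a b hab => by injection hab)
  have hBi' : (B'.image fun u => (u, v')).card = B'.card :=
    Finset.card_image_of_injective _ (fun a b hab => by injection hab)
  have h1 : B.card + B'.card ≤ k := by
    have := Finset.card_le_card hsub
    rw [Finset.card_union_of_disjoint hdisj, hBi, hBi'] at this
    omega
  have h2 : UD.card ≤ B.card + B'.card :=
    le_trans (Finset.card_le_card hUDsub) (Finset.card_union_le B B')
  omega

end Helpers

/-- in a `k`-defective biclique with both sides larger than `k`, any two
vertices are joined by a walk of length at most 3 inside `D`. -/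
theorem kDefectiveBiclique_diameter_le_three {α β : Type*} [DecidableEq α] [DecidableEq β]
    (U : Finset α) (V : Finset β) (E : Finset (α × β)) (hE : E ⊆ U ×ˢ V)
    (k : ℕ) (UD : Finset α) (VD : Finset β) (hUD : UD ⊆ U) (hVD : VD ⊆ V)
    (hdef : ((UD ×ˢ VD) \ E).card ≤ k)
    (hU : k < UD.card) (hV : k < VD.card) :
    ∀ x y : α ⊕ β, inD UD VD x → inD UD VD y →
      x = y ∨ adjD UD VD E x y ∨
        (∃ z, adjD UD VD E x z ∧ adjD UD VD E z y) ∨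
        (∃ z w, adjD UD VD E x z ∧ adjD UD VD E z w ∧ adjD UD VD E w y) := by
  rintro (u | v) (u' | v') hx hy
  · -- inl u, inl u'
    by_cases hne : u = u'
    · exact Or.inl (by rw [hne])
    · obtain ⟨w, hw, h1, h2⟩ := common_right hdef hV hx hy hne
      exact Or.inr (Or.inr (Or.inl ⟨Sum.inr w, ⟨hx, hw, h1⟩, ⟨hy, hw, h2⟩⟩))
  · -- inl u, inr v'
    by_cases he : (u, v') ∈ E
    · exact Or.inr (Or.inl ⟨hx, hy, he⟩)
    · obtain ⟨w, hw, hew⟩ := neighbor_right hdef hV hx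
      have hne : w ≠ v' := fun h => he (h ▸ hew)
      obtain ⟨u', hu', h1, h2⟩ := common_left hdef hU hw hy hne
      exact Or.inr (Or.inr (Or.inr ⟨Sum.inr w, Sum.inl u',
        ⟨hx, hw, hew⟩, ⟨hu', hw, h1⟩, ⟨hu', hy, h2⟩⟩))
  · -- inr v, inl u'
    by_cases he : (u', v) ∈ E
    · exact Or.inr (Or.inl ⟨hy, hx, he⟩)
    · obtain ⟨w, hw, hew⟩ := neighbor_right hdef hV hy
      have hne : v ≠ w := fun h => he (h ▸ hew)
      obtain ⟨u'', hu'', h1, h2⟩ := common_left hdef hU hx hw hne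
      exact Or.inr (Or.inr (Or.inr ⟨Sum.inl u'', Sum.inr w,
        ⟨hu'', hx, h1⟩, ⟨hu'', hw, h2⟩, ⟨hy, hw, hew⟩⟩))
  · -- inr v, inr v'
    by_cases hne : v = v'
    · exact Or.inl (by rw [hne])
    · obtain ⟨w, hw, h1, h2⟩ := common_left hdef hU hx hy hne
      exact Or.inr (Or.inr (Or.inl ⟨Sum.inl w, ⟨hw, hx, h1⟩, ⟨hw, hy, h2⟩⟩))
end

section
/- Let (S, C) be an instance with S = (U_S, V_S), C = (U_C, V_C), and let u ∈ U_C be a vertex with at most one non-neighbor in V_S ∪ V_C. Suppose D = (U_D, V_D) with U_S ⊆ U_D ⊆ U_S ∪ U_C and V_S ⊆ V_D ⊆ V_S ∪ V_C induces a k-defective biclique, u ∉ U_D, and v ∈ U_D ∩ U_C is a vertex having at least one non-neighbor in V_S. Then D' = ((U_D \ {v}) ∪ {u}, V_D) also induces a k-defective biclique and has at least as many edges as D. -/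
/-- if `u ∈ U_C` has at most one non-neighbor in `V_S ∪ V_C`, `D` is a
`k`-defective biclique between `S` and `S ∪ C` excluding `u`, and `v ∈ U_D ∩ U_C` has at
least one non-neighbor in `V_S`, then swapping `v` for `u` keeps a `k`-defective biclique
with at least as many edges. -/
theorem one_non_neighbor_swap {α β : Type*} [DecidableEq α] [DecidableEq β]
    (E : Finset (α × β)) (k : ℕ)
    (US UC : Finset α) (VS VC : Finset β)
    (hUdisj : Disjoint US UC) (hVdisj : Disjoint VS VC)
    (u : α) (hu : u ∈ UC)
    (hu1 : ((VS ∪ VC).filter (fun v => (u, v) ∉ E)).card ≤ 1)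
    (UD : Finset α) (VD : Finset β)
    (hU1 : US ⊆ UD) (hU2 : UD ⊆ US ∪ UC) (hV1 : VS ⊆ VD) (hV2 : VD ⊆ VS ∪ VC)
    (hdef : ((UD ×ˢ VD) \ E).card ≤ k)
    (huD : u ∉ UD)
    (v : α) (hvD : v ∈ UD) (hvC : v ∈ UC)
    (hvnon : ∃ w ∈ VS, (v, w) ∉ E) :
    (((insert u (UD.erase v)) ×ˢ VD) \ E).card ≤ k ∧
    ((UD ×ˢ VD) ∩ E).card ≤ (((insert u (UD.erase v)) ×ˢ VD) ∩ E).card := by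
  classical
  set A := UD.erase v with hA
  have huA : u ∉ A := fun h => huD (Finset.mem_of_mem_erase h)
  have hUD : UD = insert v A := (Finset.insert_erase hvD).symm
  -- split products
  have hsplit : ∀ (a : α) (B : Finset α), a ∉ B →
      ∀ (X : Finset (α × β)),
      (((insert a B) ×ˢ VD) ∩ X).card = (({a} ×ˢ VD) ∩ X).card + ((B ×ˢ VD) ∩ X).card ∧
      (((insert a B) ×ˢ VD) \ X).card = (({a} ×ˢ VD) \ X).card + ((B ×ˢ VD) \ X).card := by
    intro a B haB X
    have hins : (insert a B) ×ˢ VD = ({a} ×ˢ VD) ∪ (B ×ˢ VD) := by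
      rw [Finset.insert_eq, Finset.union_product]
    have hdisj : Disjoint ({a} ×ˢ VD) (B ×ˢ VD) := by
      rw [Finset.disjoint_left]
      rintro ⟨x, y⟩ hx hy
      simp only [Finset.mem_product, Finset.mem_singleton] at hx hy
      exact haB (hx.1 ▸ hy.1)
    constructor
    · rw [hins, Finset.union_inter_distrib_right, Finset.card_union_of_disjoint
        (hdisj.mono Finset.inter_subset_left Finset.inter_subset_left)]
    · rw [hins, Finset.union_sdiff_distrib, Finset.card_union_of_disjoint
        (hdisj.mono Finset.sdiff_subset Finset.sdiff_subset)]
  -- singleton counts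
  have hsingN : ∀ a : α, (({a} ×ˢ VD) \ E).card = (VD.filter fun w => (a, w) ∉ E).card := by
    intro a
    have : ({a} ×ˢ VD) \ E = {a} ×ˢ (VD.filter fun w => (a, w) ∉ E) := by
      ext ⟨x, y⟩
      simp only [Finset.mem_sdiff, Finset.mem_product, Finset.mem_singleton, Finset.mem_filter]
      constructor
      · rintro ⟨⟨rfl, hy⟩, hE⟩; exact ⟨rfl, hy, hE⟩
      · rintro ⟨rfl, hy, hE⟩; exact ⟨⟨rfl, hy⟩, hE⟩
    rw [this, Finset.card_product, Finset.card_singleton, one_mul]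
  have hsingE : ∀ a : α, (({a} ×ˢ VD) ∩ E).card = VD.card - (VD.filter fun w => (a, w) ∉ E).card := by
    intro a
    have : ({a} ×ˢ VD) ∩ E = {a} ×ˢ (VD.filter fun w => (a, w) ∈ E) := by
      ext ⟨x, y⟩
      simp only [Finset.mem_inter, Finset.mem_product, Finset.mem_singleton, Finset.mem_filter]
      constructor
      · rintro ⟨⟨rfl, hy⟩, hE⟩; exact ⟨rfl, hy, hE⟩
      · rintro ⟨rfl, hy, hE⟩; exact ⟨⟨rfl, hy⟩, hE⟩
    rw [this, Finset.card_product, Finset.card_singleton, one_mul]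
    have h2 := Finset.card_filter_add_card_filter_not (s := VD) (p := fun w => (a, w) ∈ E)
    omega
  -- key inequalities on counts
  have hfu : (VD.filter fun w => (u, w) ∉ E).card ≤ 1 :=
    le_trans (Finset.card_le_card (Finset.filter_subset_filter _ hV2)) hu1
  have hfv : 1 ≤ (VD.filter fun w => (v, w) ∉ E).card := by
    obtain ⟨w, hwS, hwE⟩ := hvnon
    exact Finset.card_pos.mpr ⟨w, Finset.mem_filter.mpr ⟨hV1 hwS, hwE⟩⟩
  have huv : (VD.filter fun w => (u, w) ∉ E).card ≤ (VD.filter fun w => (v, w) ∉ E).card :=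
    le_trans hfu hfv
  have hfvle : (VD.filter fun w => (v, w) ∉ E).card ≤ VD.card :=
    Finset.card_le_card (Finset.filter_subset _ _)
  obtain ⟨hEu, hNu⟩ := hsplit u A huA E
  obtain ⟨hEv, hNv⟩ := hsplit v A (Finset.notMem_erase v UD) E
  rw [hUD] at hdef ⊢
  constructor
  · rw [hNu, hsingN]
    rw [hNv, hsingN] at hdef
    omega
  · rw [hEu, hEv, hsingE, hsingE]
    omega
end

section
/- Let (S, C) be an instance with S = (U_S, V_S), C = (U_C, V_C), and let u ∈ U_C be adjacent to every vertex of V_S ∪ V_C except exactly one vertex w ∈ V_C. Suppose D = (U_D, V_D) with U_S ⊆ U_D ⊆ U_S ∪ U_C and V_S ⊆ V_D ⊆ V_S ∪ V_C induces a k-defective biclique, u ∉ U_D, w ∈ V_D, and v ∈ U_D ∩ U_C is a vertex not adjacent to w. Then D' = ((U_D \ {v}) ∪ {u}, V_D) also induces a k-defective biclique and has at least as many edges as D. -/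
/-- if `u ∈ U_C` is adjacent to every vertex of `V_S ∪ V_C` except exactly one
vertex `w ∈ V_C`, `D` is a `k`-defective biclique between `S` and `S ∪ C` excluding `u` but
containing `w`, and `v ∈ U_D ∩ U_C` is not adjacent to `w`, then swapping `v` for `u` keeps a
`k`-defective biclique with at least as many edges. -/
theorem unique_non_neighbor_swap {α β : Type*} [DecidableEq α] [DecidableEq β]
    (E : Finset (α × β)) (k : ℕ)
    (US UC : Finset α) (VS VC : Finset β)
    (hUdisj : Disjoint US UC) (hVdisj : Disjoint VS VC)
    (u : α) (hu : u ∈ UC)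
    (w : β) (hw : w ∈ VC) (huw : (u, w) ∉ E)
    (hall : ∀ v ∈ VS ∪ VC, v ≠ w → (u, v) ∈ E)
    (UD : Finset α) (VD : Finset β)
    (hU1 : US ⊆ UD) (hU2 : UD ⊆ US ∪ UC) (hV1 : VS ⊆ VD) (hV2 : VD ⊆ VS ∪ VC)
    (hdef : ((UD ×ˢ VD) \ E).card ≤ k)
    (huD : u ∉ UD) (hwD : w ∈ VD)
    (v : α) (hvD : v ∈ UD) (hvC : v ∈ UC) (hvw : (v, w) ∉ E) :
    (((insert u (UD.erase v)) ×ˢ VD) \ E).card ≤ k ∧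
    ((UD ×ˢ VD) ∩ E).card ≤ (((insert u (UD.erase v)) ×ˢ VD) ∩ E).card := by
  have hUD' : insert u (UD.erase v) ×ˢ VD = {u} ×ˢ VD ∪ (UD.erase v) ×ˢ VD := by
    rw [Finset.insert_eq, Finset.union_product]
  have hUD : UD ×ˢ VD = {v} ×ˢ VD ∪ (UD.erase v) ×ˢ VD := by
    rw [← Finset.union_product, ← Finset.insert_eq, Finset.insert_erase hvD]
  have hdisj_u : Disjoint ({u} ×ˢ VD) ((UD.erase v) ×ˢ VD) := by
    simp only [Finset.disjoint_left, Finset.mem_product, Finset.mem_singleton,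
      Finset.mem_erase]
    rintro ⟨a, b⟩ ⟨rfl, hb⟩ ⟨⟨_, ha⟩, _⟩
    exact huD ha
  have hdisj_v : Disjoint ({v} ×ˢ VD) ((UD.erase v) ×ˢ VD) := by
    simp only [Finset.disjoint_left, Finset.mem_product, Finset.mem_singleton,
      Finset.mem_erase]
    rintro ⟨a, b⟩ ⟨rfl, hb⟩ ⟨⟨ha, _⟩, _⟩
    exact ha rfl
  -- row u non-edges
  have hrowu : ({u} ×ˢ VD : Finset (α × β)) \ E = {(u, w)} := by
    ext ⟨a, b⟩
    simp only [Finset.mem_sdiff, Finset.mem_product, Finset.mem_singleton, Prod.mk.injEq]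
    constructor
    · rintro ⟨⟨rfl, hb⟩, hne⟩
      refine ⟨rfl, ?_⟩
      by_contra hbw
      exact hne (hall b (hV2 hb) hbw)
    · rintro ⟨rfl, rfl⟩
      exact ⟨⟨rfl, hwD⟩, huw⟩
  have hrowu_card : (({u} ×ˢ VD : Finset (α × β)) \ E).card = 1 := by
    rw [hrowu]; simp
  have hrowv_card : 1 ≤ (({v} ×ˢ VD : Finset (α × β)) \ E).card := by
    refine Finset.card_pos.mpr ⟨(v, w), ?_⟩
    simp [hwD, hvw]
  -- cardinality relations
  have key : ∀ x : α, (({x} ×ˢ VD : Finset (α × β)) ∩ E).card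
      + (({x} ×ˢ VD : Finset (α × β)) \ E).card = VD.card := by
    intro x
    rw [Finset.card_inter_add_card_sdiff]
    simp
  have hdiff_le : (({u} ×ˢ VD : Finset (α × β)) \ E).card
      ≤ (({v} ×ˢ VD : Finset (α × β)) \ E).card := by
    rw [hrowu_card]; exact hrowv_card
  have hinter_le : (({v} ×ˢ VD : Finset (α × β)) ∩ E).card
      ≤ (({u} ×ˢ VD : Finset (α × β)) ∩ E).card := by
    have h1 := key u
    have h2 := key v
    omega
  constructor
  · calc ((insert u (UD.erase v) ×ˢ VD) \ E).card
        = (({u} ×ˢ VD \ E) ∪ ((UD.erase v) ×ˢ VD \ E)).card := by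
          rw [hUD', Finset.union_sdiff_distrib]
      _ ≤ ({u} ×ˢ VD \ E).card + ((UD.erase v) ×ˢ VD \ E).card := Finset.card_union_le _ _
      _ ≤ ({v} ×ˢ VD \ E).card + ((UD.erase v) ×ˢ VD \ E).card := by
          exact Nat.add_le_add_right hdiff_le _
      _ = (({v} ×ˢ VD \ E) ∪ ((UD.erase v) ×ˢ VD \ E)).card := by
          rw [Finset.card_union_of_disjoint (hdisj_v.mono Finset.sdiff_subset Finset.sdiff_subset)]
      _ = ((UD ×ˢ VD) \ E).card := by rw [hUD, Finset.union_sdiff_distrib]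
      _ ≤ k := hdef
  · calc ((UD ×ˢ VD) ∩ E).card
        = (({v} ×ˢ VD ∩ E) ∪ ((UD.erase v) ×ˢ VD ∩ E)).card := by
          rw [hUD, Finset.union_inter_distrib_right]
      _ ≤ ({v} ×ˢ VD ∩ E).card + ((UD.erase v) ×ˢ VD ∩ E).card := Finset.card_union_le _ _
      _ ≤ ({u} ×ˢ VD ∩ E).card + ((UD.erase v) ×ˢ VD ∩ E).card :=
          Nat.add_le_add_right hinter_le _
      _ = (({u} ×ˢ VD ∩ E) ∪ ((UD.erase v) ×ˢ VD ∩ E)).card := by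
          rw [Finset.card_union_of_disjoint
            (hdisj_u.mono Finset.inter_subset_left Finset.inter_subset_left)]
      _ = ((insert u (UD.erase v) ×ˢ VD) ∩ E).card := by
          rw [hUD', Finset.union_inter_distrib_right]
end

section
/- Let G = (U, V, E) be a bipartite graph, k and θ natural numbers with θ ≥ k, and (u, v) ∈ E with u ∈ U, v ∈ V. If the number of vertices w ∈ N(v) such that |N(u) ∩ N(w)| ≥ θ − k is strictly less than θ − k, then there is no k-defective biclique D = (U_D, V_D, E_D) of G with |U_D| ≥ θ, |V_D| ≥ θ, u ∈ U_D and v ∈ V_D. (Here N(v) ⊆ U is the neighborhood of v and N(u), N(w) ⊆ V are the neighborhoods of u and w in G.) -/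
/-!
Inside a `k`-defective biclique `(UD, VD)`, every vertex of `VD` that is not a common neighbour
of `u` and `w ∈ UD` witnesses a non-edge in the row of `u` or of `w`, so `u` and `w` have at least
`|VD| - k ≥ θ - k` common neighbours. Likewise at least `|UD| - k ≥ θ - k` vertices of `UD` are
adjacent to `v`, and each of them is counted by the hypothesis.
-/

open Finset

lemma sub_le_card_filter_of_card_filter_not_le {γ : Type*} {s : Finset γ} {p : γ → Prop}
    [DecidablePred p] {k θ : ℕ} (hs : θ ≤ #s) (hk : #(s.filter fun x => ¬p x) ≤ k) :
    θ - k ≤ #(s.filter p) := by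
  have := card_filter_add_card_filter_not (s := s) p
  omega

section DefectiveBiclique

variable {α β : Type*} [DecidableEq α] [DecidableEq β] {E : Finset (α × β)}
  {UD : Finset α} {VD : Finset β}

lemma card_filter_not_mem_le_card_nonEdges {v : β} (hv : v ∈ VD) :
    #(UD.filter fun w => (w, v) ∉ E) ≤ #((UD ×ˢ VD) \ E) := by
  refine card_le_card_of_injOn (fun w => (w, v)) (fun w hw => ?_)
    fun a _ b _ hab => congrArg Prod.fst hab
  simpa [hv] using hw

lemma card_filter_not_common_le_card_nonEdges {u w : α} (hu : u ∈ UD) (hw : w ∈ UD) :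
    #(VD.filter fun x => ¬((u, x) ∈ E ∧ (w, x) ∈ E)) ≤ #((UD ×ˢ VD) \ E) := by
  -- charge `x` to the non-edge in the row of `u` if there is one, else to the row of `w`
  refine card_le_card_of_injOn (fun x => (if (u, x) ∈ E then w else u, x)) (fun x hx => ?_)
    fun a _ b _ hab => congrArg Prod.snd hab
  simp only [coe_filter, Set.mem_ofPred_eq] at hx
  by_cases hux : (u, x) ∈ E <;> simp_all

end DefectiveBiclique

theorem common_neighbor_reduction_general {α β : Type*} [DecidableEq α] [DecidableEq β]
    (U : Finset α) (V : Finset β) (E : Finset (α × β))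
    (k θ : ℕ)
    (u : α) (v : β)
    (h : ((U.filter (fun w => (w, v) ∈ E)).filter
        (fun w => θ - k ≤ (V.filter (fun x => (u, x) ∈ E ∧ (w, x) ∈ E)).card)).card
        < θ - k) :
    ¬ ∃ (UD : Finset α) (VD : Finset β), UD ⊆ U ∧ VD ⊆ V ∧
        ((UD ×ˢ VD) \ E).card ≤ k ∧ θ ≤ UD.card ∧ θ ≤ VD.card ∧ u ∈ UD ∧ v ∈ VD := by
  rintro ⟨UD, VD, hUD, hVD, hdef, hUcard, hVcard, huD, hvD⟩
  have hcommon : ∀ w ∈ UD, θ - k ≤ #(V.filter fun x => (u, x) ∈ E ∧ (w, x) ∈ E) := fun w hw =>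
    (sub_le_card_filter_of_card_filter_not_le hVcard
      ((card_filter_not_common_le_card_nonEdges huD hw).trans hdef)).trans
      (card_le_card (filter_subset_filter _ hVD))
  have hadj : θ - k ≤ #(UD.filter fun w => (w, v) ∈ E) :=
    sub_le_card_filter_of_card_filter_not_le hUcard
      ((card_filter_not_mem_le_card_nonEdges hvD).trans hdef)
  have hsub : UD.filter (fun w => (w, v) ∈ E) ⊆
      (U.filter fun w => (w, v) ∈ E).filter
        fun w => θ - k ≤ #(V.filter fun x => (u, x) ∈ E ∧ (w, x) ∈ E) := by
    intro w hw
    rw [mem_filter] at hw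
    exact mem_filter.2 ⟨mem_filter.2 ⟨hUD hw.1, hw.2⟩, hcommon w hw.1⟩
  exact absurd (hadj.trans (card_le_card hsub)) (not_le.2 h)

/-- common-neighbor-based pruning rule. If the edge `(u, v)` has fewer than
`θ − k` vertices `w ∈ N(v)` with `|N(u) ∩ N(w)| ≥ θ − k`, then no `k`-defective biclique
with both sides of size at least `θ` contains both `u` and `v`. -/
theorem common_neighbor_reduction {α β : Type*} [DecidableEq α] [DecidableEq β]
    (U : Finset α) (V : Finset β) (E : Finset (α × β)) (hE : E ⊆ U ×ˢ V)
    (k θ : ℕ) (hθ : k ≤ θ)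
    (u : α) (v : β) (huv : (u, v) ∈ E)
    (h : ((U.filter (fun w => (w, v) ∈ E)).filter
        (fun w => θ - k ≤ (V.filter (fun x => (u, x) ∈ E ∧ (w, x) ∈ E)).card)).card
        < θ - k) :
    ¬ ∃ (UD : Finset α) (VD : Finset β), UD ⊆ U ∧ VD ⊆ V ∧
        ((UD ×ˢ VD) \ E).card ≤ k ∧ θ ≤ UD.card ∧ θ ≤ VD.card ∧ u ∈ UD ∧ v ∈ VD :=
  common_neighbor_reduction_general U V E k θ u v h
end

section
/- Let (S, C) be an instance with S = (U_S, V_S), C = (U_C, V_C), and suppose the subgraph induced by S has at most k non-edges, i.e., |Ē_S| ≤ k. For w ∈ U_C let d̄_S(w) = |{v ∈ V_S : (w, v) ∉ E}|, and let σ(i) denote the sum of the i smallest values of d̄_S over U_C (counted with multiplicity); define i* as the largest i ∈ {0, 1, …, |U_C|} with σ(i) ≤ k − |Ē_S|, and define j* symmetrically for V_C. Then every k-defective biclique D = (U_D, V_D) with U_S ⊆ U_D ⊆ U_S ∪ U_C and V_S ⊆ V_D ⊆ V_S ∪ V_C satisfies |U_D| ≤ |U_S| + i* and |V_D| ≤ |V_S|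 + j*. -/
/-- The number of non-neighbors of `w ∈ U` in `V_S` (with respect to the edge set `E`). -/
def dbarU {α β : Type*} [DecidableEq α] [DecidableEq β]
    (E : Finset (α × β)) (VS : Finset β) (w : α) : ℕ :=
  (VS.filter (fun v => (w, v) ∉ E)).card

/-- The number of non-neighbors of `w ∈ V` in `U_S` (with respect to the edge set `E`). -/
def dbarV {α β : Type*} [DecidableEq α] [DecidableEq β]
    (E : Finset (α × β)) (US : Finset α) (w : β) : ℕ :=
  (US.filter (fun u => (u, w) ∉ E)).card

/-- The sum of the `i` smallest values (with multiplicity) of `f` over the finset `s`. -/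
def smallSum {γ : Type*} (s : Finset γ) (f : γ → ℕ) (i : ℕ) : ℕ :=
  (((s.val.map f).sort (· ≤ ·)).take i).sum

/-!
The vertices `X = U_D \ U_S ⊆ U_C` create, on top of `Ē_S`, the `∑_{w ∈ X} d̄_S(w)` non-edges
between `X` and `V_S`. This sum is at least `σ(|X|)`, because among the sublists of a sorted list
of a given length the prefix has the least sum. Hence `σ(|X|) ≤ k − |Ē_S|`, and so `|X| ≤ i*` by
maximality of `i*`. The bound on `V_D` is the same argument for the transposed edge set.
-/

open Finset

namespace List

lemma sum_take_le_sum_take_of_pairwise_cons {a : ℕ} {l : List ℕ}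
    (h : (a :: l).Pairwise (· ≤ ·)) {n : ℕ} (hn : n ≤ l.length) :
    ((a :: l).take n).sum ≤ (l.take n).sum := by
  cases n with
  | zero => simp
  | succ m =>
    have hm : m < l.length := hn
    have ha : a ≤ l[m] := (pairwise_cons.mp h).1 _ (getElem_mem hm)
    rw [take_succ_cons, sum_cons, take_add_one, getElem?_eq_getElem hm]
    simp only [Option.toList_some, sum_append, sum_singleton]
    omega

lemma sum_take_length_le_sum_of_sublist {l₁ l₂ : List ℕ} (h : l₁.Sublist l₂)
    (h₂ : l₂.Pairwise (· ≤ ·)) : (l₂.take l₁.length).sum ≤ l₁.sum := by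
  induction h with
  | slnil => simp
  | cons a h ih =>
    exact (sum_take_le_sum_take_of_pairwise_cons h₂ h.length_le).trans
      (ih (pairwise_cons.mp h₂).2)
  | cons_cons a _ ih =>
    simpa only [length_cons, take_succ_cons, sum_cons] using
      Nat.add_le_add_left (ih (pairwise_cons.mp h₂).2) a

end List

lemma smallSum_card_le_sum {γ : Type*} {s X : Finset γ} (hX : X ⊆ s) (f : γ → ℕ) :
    smallSum s f #X ≤ ∑ x ∈ X, f x := by
  set L := (X.val.map f).sort (· ≤ ·)
  have hsub : L.Sublist ((s.val.map f).sort (· ≤ ·)) := by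
    refine List.sublist_of_subperm_of_pairwise ?_ (Multiset.pairwise_sort _ _)
      (Multiset.pairwise_sort _ _)
    rw [← Multiset.coe_le, Multiset.sort_eq, Multiset.sort_eq]
    exact Multiset.map_le_map (val_le_iff.mpr hX)
  have hL : L.length = #X := by simp [L]
  calc smallSum s f #X ≤ L.sum := hL ▸ List.sum_take_length_le_sum_of_sublist hsub
        (Multiset.pairwise_sort _ _)
    _ = ∑ x ∈ X, f x := by rw [← Multiset.sum_coe, Multiset.sort_eq]; rfl

section NonEdges

variable {α β : Type*} [DecidableEq α] [DecidableEq β] (E : Finset (α × β))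

lemma card_product_sdiff_eq_sum_dbarU (X : Finset α) (VS : Finset β) :
    #((X ×ˢ VS) \ E) = ∑ w ∈ X, dbarU E VS w := by
  rw [sdiff_eq_filter, card_filter, sum_product]
  simp only [dbarU, card_filter]

lemma card_product_sdiff_add_le {A A' : Finset α} {B B' : Finset β} (hA : A ⊆ A') (hB : B ⊆ B') :
    #((A ×ˢ B) \ E) + #(((A' \ A) ×ˢ B) \ E) ≤ #((A' ×ˢ B') \ E) := by
  have hdisj : Disjoint ((A ×ˢ B) \ E) (((A' \ A) ×ˢ B) \ E) :=
    (disjoint_product.mpr (Or.inl disjoint_sdiff)).mono sdiff_subset sdiff_subset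
  calc #((A ×ˢ B) \ E) + #(((A' \ A) ×ˢ B) \ E) = #((A' ×ˢ B) \ E) := by
        rw [← card_union_of_disjoint hdisj, ← union_sdiff_distrib, ← union_product,
          union_sdiff_of_subset hA]
    _ ≤ #((A' ×ˢ B') \ E) :=
        card_le_card (sdiff_subset_sdiff (product_subset_product_right hB) le_rfl)

theorem card_le_add_of_smallSum_le_imp_le (k : ℕ) {US UC UD : Finset α} {VS VD : Finset β}
    {istar : ℕ} (histar : ∀ i ≤ #UC,
      smallSum UC (dbarU E VS) i ≤ k - #((US ×ˢ VS) \ E) → i ≤ istar)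
    (hU1 : US ⊆ UD) (hU2 : UD ⊆ US ∪ UC) (hV1 : VS ⊆ VD) (hdef : #((UD ×ˢ VD) \ E) ≤ k) :
    #UD ≤ #US + istar := by
  have hXC : UD \ US ⊆ UC := sdiff_le_iff.mpr hU2
  have hcard : #UD = #US + #(UD \ US) := by
    rw [add_comm, card_sdiff_add_card_eq_card hU1]
  have hX : smallSum UC (dbarU E VS) #(UD \ US) ≤ k - #((US ×ˢ VS) \ E) := by
    have := card_product_sdiff_add_le E hU1 hV1
    rw [card_product_sdiff_eq_sum_dbarU E (UD \ US)] at this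
    have := smallSum_card_le_sum hXC (dbarU E VS)
    omega
  rw [hcard]
  exact Nat.add_le_add_left (histar _ (card_le_card hXC) hX) _

lemma dbarU_image_swap (US : Finset α) : dbarU (E.image Prod.swap) US = dbarV E US := by
  ext w
  simp [dbarU, dbarV]

lemma card_product_sdiff_image_swap (A : Finset α) (B : Finset β) :
    #((B ×ˢ A) \ E.image Prod.swap) = #((A ×ˢ B) \ E) := by
  rw [← image_swap_product, ← image_sdiff _ _ Prod.swap_injective,
    card_image_of_injective _ Prod.swap_injective]

end NonEdges

theorem vertex_upper_bounds_general {α β : Type*} [DecidableEq α] [DecidableEq β]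
    (E : Finset (α × β)) (k : ℕ)
    (US UC : Finset α) (VS VC : Finset β)
    (istar : ℕ)
    (histar3 : ∀ i ≤ UC.card,
      smallSum UC (dbarU E VS) i ≤ k - ((US ×ˢ VS) \ E).card → i ≤ istar)
    (jstar : ℕ)
    (hjstar3 : ∀ j ≤ VC.card,
      smallSum VC (dbarV E US) j ≤ k - ((US ×ˢ VS) \ E).card → j ≤ jstar)
    (UD : Finset α) (VD : Finset β)
    (hU1 : US ⊆ UD) (hU2 : UD ⊆ US ∪ UC) (hV1 : VS ⊆ VD) (hV2 : VD ⊆ VS ∪ VC)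
    (hdef : ((UD ×ˢ VD) \ E).card ≤ k) :
    UD.card ≤ US.card + istar ∧ VD.card ≤ VS.card + jstar := by
  refine ⟨card_le_add_of_smallSum_le_imp_le E k histar3 hU1 hU2 hV1 hdef,
    card_le_add_of_smallSum_le_imp_le (E.image Prod.swap) k ?_ hV1 hV2 hU1 ?_⟩
  · simpa only [dbarU_image_swap, card_product_sdiff_image_swap] using hjstar3
  · rwa [card_product_sdiff_image_swap]

/-- vertex upper bounds. If `i*` is the largest `i ≤ |U_C|` whose `i` smallest
values of `d̄_S` over `U_C` sum to at most `k − |Ē_S|`, and `j*` symmetrically for `V_C`,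
then every `k`-defective biclique `D` between `S` and `S ∪ C` has `|U_D| ≤ |U_S| + i*` and
`|V_D| ≤ |V_S| + j*`. -/
theorem vertex_upper_bounds {α β : Type*} [DecidableEq α] [DecidableEq β]
    (E : Finset (α × β)) (k : ℕ)
    (US UC : Finset α) (VS VC : Finset β)
    (hUdisj : Disjoint US UC) (hVdisj : Disjoint VS VC)
    (hES : ((US ×ˢ VS) \ E).card ≤ k)
    (istar : ℕ) (histar1 : istar ≤ UC.card)
    (histar2 : smallSum UC (dbarU E VS) istar ≤ k - ((US ×ˢ VS) \ E).card)
    (histar3 : ∀ i ≤ UC.card,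
      smallSum UC (dbarU E VS) i ≤ k - ((US ×ˢ VS) \ E).card → i ≤ istar)
    (jstar : ℕ) (hjstar1 : jstar ≤ VC.card)
    (hjstar2 : smallSum VC (dbarV E US) jstar ≤ k - ((US ×ˢ VS) \ E).card)
    (hjstar3 : ∀ j ≤ VC.card,
      smallSum VC (dbarV E US) j ≤ k - ((US ×ˢ VS) \ E).card → j ≤ jstar)
    (UD : Finset α) (VD : Finset β)
    (hU1 : US ⊆ UD) (hU2 : UD ⊆ US ∪ UC) (hV1 : VS ⊆ VD) (hV2 : VD ⊆ VS ∪ VC)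
    (hdef : ((UD ×ˢ VD) \ E).card ≤ k) :
    UD.card ≤ US.card + istar ∧ VD.card ≤ VS.card + jstar :=
  vertex_upper_bounds_general E k US UC VS VC istar histar3 jstar hjstar3 UD VD hU1 hU2 hV1 hV2 hdef
end

section
/- Let D = (U_D, V_D, E_D) be a k-defective biclique of a bipartite graph G with |U_D| ≥ θ and |V_D| ≥ θ for some natural number θ ≥ 1. Let (a_t) be a sequence of natural numbers with a_0 ≥ |U_D| and a_t = max(θ, ⌊a_{t−1}/2⌋) for t ≥ 1, and for each t ≥ 1 let b_t = max(θ, ⌊e_t / a_{t−1}⌋) where e_t is any natural number with e_t ≤ |E_D|. Then there exists t ≥ 1 such that a_t ≤ |U_D| and b_t ≤ |V_D|. -/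
/-!
The sequence `a` halves until it is floored at `θ ≤ |U_D|`, so some round crosses `|U_D|`
downwards: `a (s + 1) ≤ |U_D| ≤ a s`. In that round `e (s + 1) ≤ |E_D| ≤ |U_D| |V_D|`, hence
`e (s + 1) / a s ≤ |V_D|` and `b (s + 1) ≤ |V_D|`.
-/

section HalvingSequence

variable {a : ℕ → ℕ} {θ : ℕ}

theorem le_max_div_two_pow_of_halving (ha : ∀ t, a (t + 1) = max θ (a t / 2)) (t : ℕ) :
    a t ≤ max θ (a 0 / 2 ^ t) := by
  induction t with
  | zero => simp
  | succ n ih =>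
    rw [ha n, pow_succ, ← Nat.div_div_eq_div_mul]
    omega

theorem exists_succ_le_of_halving (ha : ∀ t, a (t + 1) = max θ (a t / 2)) :
    ∃ t, a (t + 1) ≤ θ := by
  refine ⟨a 0, (le_max_div_two_pow_of_halving ha _).trans ?_⟩
  have hlt : a 0 < 2 ^ (a 0 + 1) := (Nat.lt_two_pow_self).trans (Nat.pow_lt_pow_succ one_lt_two)
  simp [Nat.div_eq_of_lt hlt]

end HalvingSequence

theorem Nat.exists_succ_le_le_of_le_zero {a : ℕ → ℕ} {n : ℕ} (h0 : n ≤ a 0)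
    (h : ∃ t, a (t + 1) ≤ n) : ∃ s, a (s + 1) ≤ n ∧ n ≤ a s := by
  classical
  refine ⟨Nat.find h, Nat.find_spec h, ?_⟩
  rcases hs : Nat.find h with _ | s
  · exact h0
  · exact le_of_not_ge (Nat.find_min h (hs ▸ Nat.lt_succ_self s))

theorem progressive_bounding_general {α β : Type*} [DecidableEq α] [DecidableEq β]
    (E : Finset (α × β)) (θ : ℕ)
    (UD : Finset α) (VD : Finset β)
    (hU : θ ≤ UD.card) (hV : θ ≤ VD.card)
    (a b e : ℕ → ℕ)
    (ha0 : UD.card ≤ a 0)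
    (ha : ∀ t, a (t + 1) = max θ (a t / 2))
    (he : ∀ t, e (t + 1) ≤ ((UD ×ˢ VD) ∩ E).card)
    (hb : ∀ t, b (t + 1) = max θ (e (t + 1) / a t)) :
    ∃ t, 1 ≤ t ∧ a t ≤ UD.card ∧ b t ≤ VD.card := by
  obtain ⟨s, has_succ, has⟩ := Nat.exists_succ_le_le_of_le_zero ha0
    ((exists_succ_le_of_halving ha).imp fun _ h ↦ h.trans hU)
  refine ⟨s + 1, Nat.le_add_left 1 s, has_succ, ?_⟩
  rw [hb s]
  refine max_le hV (Nat.div_le_of_le_mul ?_)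
  calc e (s + 1) ≤ ((UD ×ˢ VD) ∩ E).card := he s
    _ ≤ (UD ×ˢ VD).card := Finset.card_le_card Finset.inter_subset_left
    _ = UD.card * VD.card := Finset.card_product UD VD
    _ ≤ a s * VD.card := Nat.mul_le_mul_right _ has

/-- correctness of the progressive bounding reduction. For a `k`-defective
biclique `D` with both sides of size at least `θ ≥ 1`, sequences
`a (t+1) = max θ (a t / 2)` with `a 0 ≥ |U_D|`, and `b (t+1) = max θ (e (t+1) / a t)` with
`e (t+1) ≤ |E_D|`, there is a round `t ≥ 1` with `a t ≤ |U_D|` and `b t ≤ |V_D|`. -/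
theorem progressive_bounding {α β : Type*} [DecidableEq α] [DecidableEq β]
    (E : Finset (α × β)) (k θ : ℕ) (hθ : 1 ≤ θ)
    (UD : Finset α) (VD : Finset β)
    (hdef : ((UD ×ˢ VD) \ E).card ≤ k)
    (hU : θ ≤ UD.card) (hV : θ ≤ VD.card)
    (a b e : ℕ → ℕ)
    (ha0 : UD.card ≤ a 0)
    (ha : ∀ t, a (t + 1) = max θ (a t / 2))
    (he : ∀ t, e (t + 1) ≤ ((UD ×ˢ VD) ∩ E).card)
    (hb : ∀ t, b (t + 1) = max θ (e (t + 1) / a t)) :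
    ∃ t, 1 ≤ t ∧ a t ≤ UD.card ∧ b t ≤ VD.card :=
  progressive_bounding_general E θ UD VD hU hV a b e ha0 ha he hb
end

section
/- Let D = (U_D, V_D, E_D) be a k-defective biclique of a bipartite graph G = (U, V, E) with V_D nonempty. Then |U_D| ≤ Δ + k, where Δ = max_{v ∈ V} |{u ∈ U : (u, v) ∈ E}| is the maximum degree over vertices of V. -/
/-- a `k`-defective biclique with nonempty right side satisfies
`|U_D| ≤ Δ + k`, where `Δ` is the maximum degree over the vertices of `V`. -/
theorem side_size_le_maxDegree_add_k {α β : Type*} [DecidableEq α] [DecidableEq β]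
    (U : Finset α) (V : Finset β) (E : Finset (α × β)) (hE : E ⊆ U ×ˢ V)
    (hVne : V.Nonempty)
    (k : ℕ) (UD : Finset α) (VD : Finset β) (hUD : UD ⊆ U) (hVD : VD ⊆ V)
    (hdef : ((UD ×ˢ VD) \ E).card ≤ k)
    (hVDne : VD.Nonempty) :
    UD.card ≤ V.sup (fun v => (U.filter (fun u => (u, v) ∈ E)).card) + k := by
  obtain ⟨v, hv⟩ := hVDne
  have hsplit := Finset.card_filter_add_card_filter_not
    (s := UD) (p := fun u => (u, v) ∈ E)
  rw [← hsplit]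
  gcongr
  · calc (UD.filter (fun u => (u, v) ∈ E)).card
        ≤ (U.filter (fun u => (u, v) ∈ E)).card :=
          Finset.card_le_card (Finset.filter_subset_filter _ hUD)
      _ ≤ V.sup (fun v => (U.filter (fun u => (u, v) ∈ E)).card) :=
          Finset.le_sup (f := fun v => (U.filter (fun u => (u, v) ∈ E)).card) (hVD hv)
  · calc (UD.filter (fun u => (u, v) ∉ E)).card
        = ((UD.filter (fun u => (u, v) ∉ E)).image (fun u => (u, v))).card := by
          rw [Finset.card_image_of_injective _ (fun a b h => (Prod.mk.injEq ..).mp h |>.1)]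
      _ ≤ ((UD ×ˢ VD) \ E).card := by
          apply Finset.card_le_card
          intro p hp
          simp only [Finset.mem_image, Finset.mem_filter] at hp
          obtain ⟨u, ⟨hu, hne⟩, rfl⟩ := hp
          simp [Finset.mem_sdiff, Finset.mem_product, hu, hv, hne]
      _ ≤ k := hdef
end

section
/- For every integer k ≥ 1, the polynomial p_k(x) = x^{2k+5} − 2x^{2k+4} + x^3 − x^2 + 1 satisfies p_k(x) > 0 for every real x ≥ 2, and p_k has a real root in the open interval (1.9, 2). Consequently the largest real root α_k of p_k exists and satisfies 1.9 < α_k < 2. -/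
/-- The characteristic polynomial of the branch-and-bound recurrence:
`p_k(x) = x^(2k+5) − 2x^(2k+4) + x^3 − x^2 + 1`. -/
noncomputable def pPoly (k : ℕ) (x : ℝ) : ℝ :=
  x ^ (2 * k + 5) - 2 * x ^ (2 * k + 4) + x ^ 3 - x ^ 2 + 1

lemma pPoly_continuous (k : ℕ) : Continuous (pPoly k) := by
  unfold pPoly; continuity

lemma pPoly_pos (k : ℕ) (x : ℝ) (hx : 2 ≤ x) : 0 < pPoly k x := by
  unfold pPoly
  have h1 : x ^ (2 * k + 5) = x ^ (2 * k + 4) * x := (pow_succ x (2 * k + 4))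
  have h2 : (0 : ℝ) ≤ x ^ (2 * k + 4) := by positivity
  nlinarith [sq_nonneg x, mul_nonneg h2 (by linarith : (0:ℝ) ≤ x - 2),
    sq_nonneg (x - 2), mul_nonneg (sq_nonneg x) (by linarith : (0:ℝ) ≤ x - 1)]

lemma pPoly_neg (k : ℕ) (hk : 1 ≤ k) : pPoly k (1.9 : ℝ) < 0 := by
  unfold pPoly
  have h1 : (1.9 : ℝ) ^ (2 * k + 5) = (1.9 : ℝ) ^ (2 * k + 4) * 1.9 :=
    (pow_succ _ _)
  have h6 : (1.9 : ℝ) ^ 6 ≤ (1.9 : ℝ) ^ (2 * k + 4) :=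
    pow_le_pow_right₀ (by norm_num) (by omega)
  nlinarith [h6]

/-- for every `k ≥ 1`, `p_k(x) > 0` for all real `x ≥ 2`, `p_k` has a real
root in `(1.9, 2)`, and consequently the largest real root `α_k` of `p_k` exists and
satisfies `1.9 < α_k < 2`. -/
theorem pPoly_largest_root (k : ℕ) (hk : 1 ≤ k) :
    (∀ x : ℝ, 2 ≤ x → 0 < pPoly k x) ∧
    (∃ x : ℝ, (1.9 : ℝ) < x ∧ x < 2 ∧ pPoly k x = 0) ∧
    (∃ α : ℝ, pPoly k α = 0 ∧ (∀ x : ℝ, pPoly k x = 0 → x ≤ α) ∧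
      (1.9 : ℝ) < α ∧ α < 2) := by
  have hcont := pPoly_continuous k
  have hneg := pPoly_neg k hk
  have hpos : 0 < pPoly k 2 := pPoly_pos k 2 le_rfl
  -- root in (1.9, 2)
  have hroot : ∃ x : ℝ, (1.9 : ℝ) < x ∧ x < 2 ∧ pPoly k x = 0 := by
    have hsub := intermediate_value_Ioo (by norm_num : (1.9:ℝ) ≤ 2)
      (hcont.continuousOn (s := Set.Icc (1.9:ℝ) 2))
    have : (0:ℝ) ∈ Set.Ioo (pPoly k 1.9) (pPoly k 2) := ⟨hneg, hpos⟩
    obtain ⟨x, hx, hfx⟩ := hsub this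
    exact ⟨x, hx.1, hx.2, hfx⟩
  refine ⟨fun x hx => pPoly_pos k x hx, hroot, ?_⟩
  obtain ⟨x₀, hx₀1, hx₀2, hx₀0⟩ := hroot
  set S : Set ℝ := {x : ℝ | pPoly k x = 0} with hS
  have hSne : S.Nonempty := ⟨x₀, hx₀0⟩
  have hSbd : BddAbove S := by
    refine ⟨2, fun y hy => ?_⟩
    by_contra h
    push_neg at h
    exact absurd hy (ne_of_gt (pPoly_pos k y h.le))
  have hScl : IsClosed S := isClosed_singleton.preimage hcont
  have hmem : sSup S ∈ S := hScl.csSup_mem hSne hSbd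
  refine ⟨sSup S, hmem, fun x hx => le_csSup hSbd hx, ?_, ?_⟩
  · exact lt_of_lt_of_le hx₀1 (le_csSup hSbd hx₀0)
  · by_contra h
    push_neg at h
    exact absurd hmem (ne_of_gt (pPoly_pos k _ h))
end

section
/- For every integer r ≥ 2 and every real x ≥ √2, x^{2r} > 2x^{r−1} + Σ_{i=0}^{r−2} x^i. Consequently, every real root of the polynomial x^{2r} − 2x^{r−1} − Σ_{i=0}^{r−2} x^i is strictly less than √2. -/
private lemma pivot_aux (k : ℕ) (hk : 1 ≤ k) (x : ℝ) (hx : Real.sqrt 2 ≤ x) :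
    2 * x ^ k + (∑ i ∈ Finset.range k, x ^ i) < x ^ (2 * (k + 1)) := by
  have hs0 : (0:ℝ) ≤ Real.sqrt 2 := Real.sqrt_nonneg 2
  have hs2 : Real.sqrt 2 ^ 2 = 2 := Real.sq_sqrt (by norm_num)
  have hx0 : 0 < x := lt_of_lt_of_le (by positivity) hx
  have hx2 : 2 ≤ x ^ 2 := by nlinarith
  have hq : 0 ≤ 2 * x ^ 2 - 2 * x - 1 := by nlinarith [sq_nonneg (x - 1)]
  induction k with
  | zero => omega
  | succ k ih =>
    rcases Nat.eq_or_lt_of_le hk with h1 | h1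
    · -- base case k + 1 = 1
      have : k = 0 := by omega
      subst this
      norm_num [Finset.sum_range_one]
      have h4 : x ^ (2 * (0 + 1 + 1)) = x ^ 2 * x ^ 2 := by ring
      rw [h4]
      nlinarith
    · have hk1 : 1 ≤ k := by omega
      have IH := ih hk1
      have hpow : x ^ (2 * (k + 1 + 1)) = x ^ (2 * (k + 1)) * x ^ 2 := by ring
      have hS : 0 ≤ ∑ i ∈ Finset.range k, x ^ i :=
        Finset.sum_nonneg fun i _ => by positivity
      have hxk : 0 < x ^ k := by positivity
      have h1' : (2 * x ^ k + ∑ i ∈ Finset.range k, x ^ i) * x ^ 2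
          < x ^ (2 * (k + 1)) * x ^ 2 := by
        apply mul_lt_mul_of_pos_right IH (by positivity)
      rw [hpow, Finset.sum_range_succ]
      have e1 : x ^ (k + 1) = x ^ k * x := by ring
      have h2 : 2 * x ^ (k + 1) + ((∑ i ∈ Finset.range k, x ^ i) + x ^ k)
          ≤ (2 * x ^ k + ∑ i ∈ Finset.range k, x ^ i) * x ^ 2 := by
        rw [e1]
        nlinarith [mul_nonneg hxk.le hq, mul_nonneg hS (by linarith : (0:ℝ) ≤ x ^ 2 - 1)]
      linarith

/-- for every integer `r ≥ 2` and every real `x ≥ √2`,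
`x^(2r) > 2x^(r−1) + Σ_{i=0}^{r−2} x^i`; consequently every real root of
`x^(2r) − 2x^(r−1) − Σ_{i=0}^{r−2} x^i` is strictly less than `√2`. -/
theorem pivot_recurrence_root_lt_sqrt_two (r : ℕ) (hr : 2 ≤ r) :
    (∀ x : ℝ, Real.sqrt 2 ≤ x →
      2 * x ^ (r - 1) + (∑ i ∈ Finset.range (r - 1), x ^ i) < x ^ (2 * r)) ∧
    (∀ x : ℝ,
      x ^ (2 * r) - 2 * x ^ (r - 1) - (∑ i ∈ Finset.range (r - 1), x ^ i) = 0 →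
      x < Real.sqrt 2) := by
  have key : ∀ x : ℝ, Real.sqrt 2 ≤ x →
      2 * x ^ (r - 1) + (∑ i ∈ Finset.range (r - 1), x ^ i) < x ^ (2 * r) := by
    intro x hx
    have hk : 1 ≤ r - 1 := by omega
    have := pivot_aux (r - 1) hk x hx
    have hre : r - 1 + 1 = r := by omega
    rwa [hre] at this
  refine ⟨key, fun x hroot => ?_⟩
  by_contra h
  push_neg at h
  have := key x h
  linarith
end
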